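/- arXiv:2206.07235 — 4 statements merged into one kernel-verified Lean document; each statement's English description precedes it below -/
import Mathlib

section
/- For every real r with 0 < r < 1, ∫_0^∞ e^{(r−1)x} · (∫_{rx}^∞ (e^{−t}/t) dt) dx = log(r) / (r − 1). -/
/-!
Substituting `t = x s` gives `e^{-c x} E₁(a x) = ∫_a^∞ e^{-(s + c) x} / s ds`. The integrand is
nonnegative, so Fubini applies, and the inner `x`-integral is `1 / (s (s + c))`, whose
antiderivative `(log s - log (s + c)) / c` vanishes at infinity. With `a = r`, `c = 1 - r` this
is `log (1 / r) / (1 - r)`.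
-/

open MeasureTheory Set Filter Real Topology

/-- The exponential integral `E₁`; for `x ≤ 0` the integrand is not integrable and the value is
the junk `0`. -/
noncomputable def expIntegralE₁ (x : ℝ) : ℝ := ∫ t in Ioi x, exp (-t) / t

variable {a c : ℝ}

theorem integral_Ioi_zero_exp_neg_mul {b : ℝ} (hb : 0 < b) :
    ∫ x in Ioi (0 : ℝ), exp (-b * x) = b⁻¹ := by
  rw [integral_exp_mul_Ioi (neg_neg_of_pos hb), mul_zero, exp_zero, div_neg, neg_div, neg_neg,
    one_div]

theorem expIntegralE₁_mul {x : ℝ} (hx : 0 < x) :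
    expIntegralE₁ (a * x) = ∫ s in Ioi a, exp (-(x * s)) / s := by
  rw [expIntegralE₁, mul_comm a x, ← integral_comp_mul_left_Ioi' _ a hx, smul_eq_mul,
    ← integral_const_mul]
  refine setIntegral_congr_fun measurableSet_Ioi fun s _ => ?_
  field_simp [hx.ne']

theorem exp_neg_mul_mul_expIntegralE₁_mul {x : ℝ} (hx : 0 < x) :
    exp (-c * x) * expIntegralE₁ (a * x) = ∫ s in Ioi a, exp (-(s + c) * x) / s := by
  rw [expIntegralE₁_mul hx, ← integral_const_mul]
  refine setIntegral_congr_fun measurableSet_Ioi fun s _ => ?_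
  rw [mul_div_assoc', ← exp_add]
  ring_nf

theorem integral_Ioi_zero_exp_neg_add_mul_div {s : ℝ} (hsc : 0 < s + c) :
    ∫ x in Ioi (0 : ℝ), exp (-(s + c) * x) / s = s⁻¹ * (s + c)⁻¹ := by
  rw [integral_div, integral_Ioi_zero_exp_neg_mul hsc, div_eq_inv_mul]

theorem integrableOn_Ioi_inv_mul_inv_add (ha : 0 < a) (hac : 0 < a + c) :
    IntegrableOn (fun s => s⁻¹ * (s + c)⁻¹) (Ioi a) := by
  have hsq : ∀ m, -m < a → IntegrableOn (fun s : ℝ => ((s + m) ^ 2)⁻¹) (Ioi a) := fun m hm =>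
    (integrableOn_add_rpow_Ioi_of_lt (by norm_num : (-2 : ℝ) < -1) hm).congr_fun
      (fun s hs => by dsimp only; rw [rpow_neg (by linarith [hs.out]), rpow_two]) measurableSet_Ioi
  refine ((hsq 0 (by simpa)).add (hsq c (by linarith))).mono'
    (by fun_prop : Measurable fun s : ℝ => s⁻¹ * (s + c)⁻¹).aestronglyMeasurable ?_
  filter_upwards [ae_restrict_mem measurableSet_Ioi] with s hs
  have hs0 : 0 < s := ha.trans hs
  have hsc : 0 < s + c := by linarith [hs.out]
  rw [norm_of_nonneg (by positivity), Pi.add_apply, add_zero, ← inv_pow, ← inv_pow]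
  -- AM-GM
  nlinarith [sq_nonneg (s⁻¹ - (s + c)⁻¹), sq_nonneg s⁻¹, sq_nonneg (s + c)⁻¹]

theorem hasDerivAt_log_sub_log_add_div {s : ℝ} (hs : 0 < s) (hsc : 0 < s + c) (hc : c ≠ 0) :
    HasDerivAt (fun s => (log s - log (s + c)) / c) (s⁻¹ * (s + c)⁻¹) s := by
  have h := ((hasDerivAt_log hs.ne').sub ((hasDerivAt_log hsc.ne').comp s
    ((hasDerivAt_id s).add_const c))).div_const c
  refine h.congr_deriv ?_
  field_simp
  ring

theorem tendsto_log_sub_log_add_div_atTop (c : ℝ) :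
    Tendsto (fun s => (log s - log (s + c)) / c) atTop (𝓝 0) := by
  have h1 : Tendsto (fun s => 1 + c / s) atTop (𝓝 1) := by
    simpa using (tendsto_const_nhds (x := c).div_atTop tendsto_id).const_add (1 : ℝ)
  have h : Tendsto (fun s => -log (1 + c / s) / c) atTop (𝓝 0) := by
    simpa using ((continuousAt_log one_ne_zero).tendsto.comp h1).neg.div_const c
  refine h.congr' ?_
  filter_upwards [eventually_gt_atTop 0, eventually_gt_atTop (-c)] with s hs hsc
  rw [one_add_div hs.ne', log_div (by linarith) hs.ne']
  ring

theorem integral_Ioi_inv_mul_inv_add (ha : 0 < a) (hac : 0 < a + c) (hc : c ≠ 0) :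
    ∫ s in Ioi a, s⁻¹ * (s + c)⁻¹ = log ((a + c) / a) / c := by
  rw [integral_Ioi_of_hasDerivAt_of_tendsto'
    (fun s hs => hasDerivAt_log_sub_log_add_div (ha.trans_le hs) (by linarith [hs.out]) hc)
    (integrableOn_Ioi_inv_mul_inv_add ha hac) (tendsto_log_sub_log_add_div_atTop c),
    log_div hac.ne' ha.ne']
  ring

theorem integrable_exp_neg_add_mul_div_prod (ha : 0 < a) (hac : 0 < a + c) :
    Integrable (Function.uncurry fun s x => exp (-(s + c) * x) / s)
      ((volume.restrict (Ioi a)).prod (volume.restrict (Ioi 0))) := by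
  have hmeas : Measurable (Function.uncurry fun s x : ℝ => exp (-(s + c) * x) / s) := by
    fun_prop
  refine (integrable_prod_iff hmeas.aestronglyMeasurable).2 ⟨?_, ?_⟩
  · filter_upwards [ae_restrict_mem measurableSet_Ioi] with s hs
    exact (integrableOn_exp_mul_Ioi (by linarith [hs.out] : -(s + c) < 0) 0).div_const s
  · refine (integrableOn_Ioi_inv_mul_inv_add ha hac).congr_fun (fun s hs => ?_) measurableSet_Ioi
    have hs0 : 0 < s := ha.trans hs
    dsimp only
    rw [← integral_Ioi_zero_exp_neg_add_mul_div (by linarith [hs.out] : 0 < s + c)]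
    refine setIntegral_congr_fun measurableSet_Ioi fun x _ => ?_
    exact (norm_of_nonneg (by positivity)).symm

theorem integral_exp_neg_mul_mul_expIntegralE₁_mul (ha : 0 < a) (hac : 0 < a + c) (hc : c ≠ 0) :
    ∫ x in Ioi 0, exp (-c * x) * expIntegralE₁ (a * x) = log ((a + c) / a) / c :=
  calc ∫ x in Ioi 0, exp (-c * x) * expIntegralE₁ (a * x)
      = ∫ x in Ioi 0, ∫ s in Ioi a, exp (-(s + c) * x) / s :=
        setIntegral_congr_fun measurableSet_Ioi fun x hx => exp_neg_mul_mul_expIntegralE₁_mul hx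
    _ = ∫ s in Ioi a, ∫ x in Ioi 0, exp (-(s + c) * x) / s :=
        (integral_integral_swap (integrable_exp_neg_add_mul_div_prod ha hac)).symm
    _ = ∫ s in Ioi a, s⁻¹ * (s + c)⁻¹ :=
        setIntegral_congr_fun measurableSet_Ioi fun s hs =>
          integral_Ioi_zero_exp_neg_add_mul_div (by linarith [hs.out])
    _ = log ((a + c) / a) / c := integral_Ioi_inv_mul_inv_add ha hac hc

/-- For every real `0 < r < 1`,
`∫_0^∞ e^{(r−1)x} (∫_{rx}^∞ (e^{−t}/t) dt) dx = log(r)/(r − 1)`. -/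
theorem stmt_5 (r : ℝ) (hr0 : 0 < r) (hr1 : r < 1) :
    ∫ x in Ioi (0 : ℝ), Real.exp ((r - 1) * x) * (∫ t in Ioi (r * x), Real.exp (-t) / t)
      = Real.log r / (r - 1) := by
  have h := integral_exp_neg_mul_mul_expIntegralE₁_mul hr0 (c := 1 - r) (by linarith)
    (by linarith)
  rw [neg_sub, add_sub_cancel, one_div, log_inv, ← neg_div_neg_eq, neg_neg, neg_sub] at h
  exact h
end

section
/- Let X and Y be independent random variables, each exponentially distributed with rate 1, and let r ∈ (0,1). Then E[log(1 + X/(rY))] = log(r)/(r − 1). Equivalently, with p = 1 − r ∈ (0,1), E[log(1 + X/((1−p)Y))] = −log(1 − p)/p. -/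
/-!
By the layer cake formula, `E[f] = ∫₀^∞ P(f > t) dt` for `f = log (1 + X / (r Y)) ≥ 0`.
The event `f > t` is `X > r (eᵗ - 1) Y`; conditioning on `Y` and using `P(X > x) = e⁻ˣ` gives
it probability `E[exp (-r (eᵗ - 1) Y)] = 1 / (1 - r + r eᵗ)`. This last function of `t` has the
antiderivative `-log (r + (1 - r) e⁻ᵗ) / (1 - r)`, which increases from `0` to `-log r / (1 - r)`.
-/

open MeasureTheory ProbabilityTheory Real Set Filter Topology

lemma lt_log_one_add_div_iff {t x y : ℝ} (hx : 0 ≤ x) (hy : 0 < y) :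
    t < log (1 + x / y) ↔ (exp t - 1) * y < x := by
  rw [lt_log_iff_exp_lt (by positivity), ← sub_lt_iff_lt_add', lt_div_iff₀ hy]

section

variable {r : ℝ}

lemma hasDerivAt_neg_log_add_mul_exp_neg_div (hr0 : 0 ≤ r) (hr1 : r < 1) (t : ℝ) :
    HasDerivAt (fun t => -log (r + (1 - r) * exp (-t)) / (1 - r)) (1 - r + r * exp t)⁻¹ t := by
  have hpos : 0 < r + (1 - r) * exp (-t) := by nlinarith [exp_pos (-t)]
  have h := ((((hasDerivAt_neg t).exp.const_mul (1 - r)).const_add r).log hpos.ne').neg.div_const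
    (1 - r)
  refine h.congr_deriv ?_
  have h1r : 1 - r ≠ 0 := by linarith
  have hden : 1 - r + r * exp t ≠ 0 := by nlinarith [exp_pos t]
  rw [exp_neg] at hpos ⊢
  field_simp
  exact (div_eq_one_iff_eq (by rwa [add_comm])).2 (by ring)

lemma tendsto_neg_log_add_mul_exp_neg_div (hr0 : 0 < r) :
    Tendsto (fun t => -log (r + (1 - r) * exp (-t)) / (1 - r)) atTop
      (𝓝 (-log r / (1 - r))) := by
  have h : Tendsto (fun t => r + (1 - r) * exp (-t)) atTop (𝓝 r) := by
    simpa using (tendsto_exp_neg_atTop_nhds_zero.const_mul (1 - r)).const_add r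
  exact ((continuousAt_log hr0.ne').tendsto.comp h).neg.div_const _

lemma inv_one_sub_add_mul_exp_nonneg (hr0 : 0 ≤ r) (hr1 : r ≤ 1) (t : ℝ) :
    0 ≤ (1 - r + r * exp t)⁻¹ :=
  inv_nonneg.2 (by nlinarith [exp_pos t])

lemma integrableOn_inv_one_sub_add_mul_exp (hr0 : 0 < r) (hr1 : r < 1) :
    IntegrableOn (fun t => (1 - r + r * exp t)⁻¹) (Ioi 0) :=
  integrableOn_Ioi_deriv_of_nonneg'
    (fun t _ => hasDerivAt_neg_log_add_mul_exp_neg_div hr0.le hr1 t)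
    (fun t _ => inv_one_sub_add_mul_exp_nonneg hr0.le hr1.le t)
    (tendsto_neg_log_add_mul_exp_neg_div hr0)

lemma integral_inv_one_sub_add_mul_exp (hr0 : 0 < r) (hr1 : r < 1) :
    ∫ t in Ioi 0, (1 - r + r * exp t)⁻¹ = log r / (r - 1) := by
  rw [integral_Ioi_of_hasDerivAt_of_nonneg'
    (fun t _ => hasDerivAt_neg_log_add_mul_exp_neg_div hr0.le hr1 t)
    (fun t _ => inv_one_sub_add_mul_exp_nonneg hr0.le hr1.le t)
    (tendsto_neg_log_add_mul_exp_neg_div hr0)]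
  have h1r : 1 - r ≠ 0 := by linarith
  have hr1' : r - 1 ≠ 0 := by linarith
  simp only [neg_zero, exp_zero, mul_one, add_sub_cancel, log_one, zero_div, sub_zero]
  field_simp
  ring

end

namespace ProbabilityTheory

lemma expMeasure_Ioi {r : ℝ} (hr : 0 < r) {a : ℝ} (ha : 0 ≤ a) :
    expMeasure r (Ioi a) = ENNReal.ofReal (exp (-(r * a))) := by
  have := isProbabilityMeasure_expMeasure hr
  have hexp : exp (-(r * a)) ≤ 1 := exp_le_one_iff.2 (by nlinarith)
  rw [← compl_Iic, prob_compl_eq_one_sub measurableSet_Iic, ← ofReal_cdf, cdf_expMeasure_eq hr,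
    if_pos ha, ← ENNReal.ofReal_one, ← ENNReal.ofReal_sub _ (sub_nonneg.2 hexp), sub_sub_cancel]

lemma ae_pos_expMeasure {r : ℝ} (hr : 0 < r) : ∀ᵐ x ∂expMeasure r, x ∈ Ioi 0 := by
  have := isProbabilityMeasure_expMeasure hr
  rw [ae_mem_iff_measure_eq measurableSet_Ioi.nullMeasurableSet, expMeasure_Ioi hr le_rfl]
  simp

lemma measurable_exponentialPDF (r : ℝ) : Measurable (exponentialPDF r) :=
  (measurable_exponentialPDFReal r).ennreal_ofReal

lemma lintegral_exp_neg_mul_expMeasure {r s : ℝ} (hr : 0 < r) (hs : 0 ≤ s) :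
    ∫⁻ y, ENNReal.ofReal (exp (-(s * y))) ∂expMeasure r = ENNReal.ofReal (r / (r + s)) := by
  have hpdf : ∀ y ∈ Ioi (0 : ℝ), exponentialPDF r y * ENNReal.ofReal (exp (-(s * y))) =
      ENNReal.ofReal (r * exp (-(r + s) * y)) := fun y hy => by
    rw [exponentialPDF_of_nonneg (le_of_lt hy), ← ENNReal.ofReal_mul (by positivity), mul_assoc,
      ← exp_add]
    ring_nf
  have hrs : -(r + s) < 0 := by linarith
  rw [← Measure.restrict_eq_self_of_ae_mem (ae_pos_expMeasure hr),
    show expMeasure r = volume.withDensity (exponentialPDF r) from rfl,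
    setLIntegral_withDensity_eq_lintegral_mul₀
      (measurable_exponentialPDF r).aemeasurable (by fun_prop) measurableSet_Ioi]
  simp only [Pi.mul_apply]
  rw [setLIntegral_congr_fun measurableSet_Ioi hpdf, ← ofReal_integral_eq_lintegral_ofReal
      ((integrableOn_exp_mul_Ioi hrs 0).const_mul r) (ae_of_all _ fun y => by positivity),
    integral_const_mul, integral_exp_mul_Ioi hrs]
  congr 1
  field_simp
  simp

lemma ae_pos_of_map_eq_expMeasure {Ω : Type*} [MeasurableSpace Ω] {μ : Measure Ω} {X : Ω → ℝ}
    (hX : AEMeasurable X μ) {a : ℝ} (ha : 0 < a) (hXd : μ.map X = expMeasure a) :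
    ∀ᵐ ω ∂μ, 0 < X ω :=
  ae_of_ae_map hX (hXd ▸ ae_pos_expMeasure ha)

lemma IndepFun.measure_mul_lt_of_expMeasure {Ω : Type*} [MeasurableSpace Ω] {μ : Measure Ω}
    [IsProbabilityMeasure μ] {X Y : Ω → ℝ} (hX : Measurable X) (hY : Measurable Y)
    (hXY : IndepFun X Y μ) {a b : ℝ} (ha : 0 < a) (hb : 0 < b)
    (hXd : μ.map X = expMeasure a) (hYd : μ.map Y = expMeasure b) {c : ℝ} (hc : 0 ≤ c) :
    μ {ω | c * Y ω < X ω} = ENNReal.ofReal (b / (b + a * c)) := by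
  have := isProbabilityMeasure_expMeasure ha
  have hs : MeasurableSet {p : ℝ × ℝ | c * p.1 < p.2} :=
    measurableSet_lt (by fun_prop) (by fun_prop)
  have hmap : μ.map (fun ω => (Y ω, X ω)) = (expMeasure b).prod (expMeasure a) := by
    rw [← hYd, ← hXd]
    exact (indepFun_iff_map_prod_eq_prod_map_map hY.aemeasurable hX.aemeasurable).1 hXY.symm
  calc μ {ω | c * Y ω < X ω} = μ.map (fun ω => (Y ω, X ω)) {p | c * p.1 < p.2} :=
        (Measure.map_apply (hY.prodMk hX) hs).symm
    _ = ∫⁻ y, expMeasure a (Ioi (c * y)) ∂expMeasure b := by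
        rw [hmap, Measure.prod_apply hs]; rfl
    _ = ∫⁻ y, ENNReal.ofReal (exp (-(a * c * y))) ∂expMeasure b := by
        refine lintegral_congr_ae ?_
        filter_upwards [ae_pos_expMeasure hb] with y hy
        rw [expMeasure_Ioi ha (mul_nonneg hc hy.le), mul_assoc]
    _ = _ := lintegral_exp_neg_mul_expMeasure hb (by positivity)

lemma IndepFun.measure_lt_log_one_add_div_of_expMeasure {Ω : Type*} [MeasurableSpace Ω]
    {μ : Measure Ω} [IsProbabilityMeasure μ] {X Y : Ω → ℝ} (hX : Measurable X) (hY : Measurable Y)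
    (hXY : IndepFun X Y μ) (hXd : μ.map X = expMeasure 1) (hYd : μ.map Y = expMeasure 1)
    {r t : ℝ} (hr : 0 < r) (ht : 0 ≤ t) :
    μ {ω | t < log (1 + X ω / (r * Y ω))} = ENNReal.ofReal ((1 - r + r * exp t)⁻¹) := by
  have hevent : {ω | t < log (1 + X ω / (r * Y ω))} =ᵐ[μ] {ω | (exp t - 1) * r * Y ω < X ω} := by
    filter_upwards [ae_pos_of_map_eq_expMeasure hX.aemeasurable one_pos hXd,
      ae_pos_of_map_eq_expMeasure hY.aemeasurable one_pos hYd] with ω hx hy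
    change (t < log _) = ((exp t - 1) * r * Y ω < X ω)
    rw [mul_assoc]
    exact propext (lt_log_one_add_div_iff hx.le (mul_pos hr hy))
  have hc : 0 ≤ (exp t - 1) * r := mul_nonneg (sub_nonneg.2 (one_le_exp ht)) hr.le
  rw [measure_congr hevent, hXY.measure_mul_lt_of_expMeasure hX hY one_pos one_pos hXd hYd hc]
  congr 1
  ring

end ProbabilityTheory

/-- If `X` and `Y` are independent `Exp(1)` random variables and
`r ∈ (0,1)`, then `E[log(1 + X/(rY))] = log(r)/(r − 1)`; equivalently, with
`p = 1 − r ∈ (0,1)`, `E[log(1 + X/((1−p)Y))] = −log(1 − p)/p`. -/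
theorem stmt_6 {Ω : Type*} [MeasureSpace Ω] [IsProbabilityMeasure (ℙ : Measure Ω)]
    (X Y : Ω → ℝ) (hX : Measurable X) (hY : Measurable Y)
    (hindep : IndepFun X Y ℙ)
    (hXd : Measure.map X ℙ = expMeasure 1) (hYd : Measure.map Y ℙ = expMeasure 1)
    (r : ℝ) (hr0 : 0 < r) (hr1 : r < 1) :
    ∫ ω, Real.log (1 + X ω / (r * Y ω)) = Real.log r / (r - 1) := by
  have hnonneg : 0 ≤ᵐ[ℙ] fun ω => log (1 + X ω / (r * Y ω)) := by
    filter_upwards [ae_pos_of_map_eq_expMeasure hX.aemeasurable one_pos hXd,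
      ae_pos_of_map_eq_expMeasure hY.aemeasurable one_pos hYd] with ω hx hy
    exact log_nonneg (le_add_of_nonneg_right (by positivity))
  have hmeas : AEMeasurable (fun ω => log (1 + X ω / (r * Y ω))) := by fun_prop
  rw [integral_eq_lintegral_of_nonneg_ae hnonneg hmeas.aestronglyMeasurable,
    lintegral_eq_lintegral_meas_lt _ hnonneg hmeas,
    setLIntegral_congr_fun measurableSet_Ioi fun t ht =>
      hindep.measure_lt_log_one_add_div_of_expMeasure hX hY hXd hYd hr0 (le_of_lt ht),
    ← ofReal_integral_eq_lintegral_ofReal (integrableOn_inv_one_sub_add_mul_exp hr0 hr1)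
      (ae_of_all _ (inv_one_sub_add_mul_exp_nonneg hr0.le hr1.le)),
    integral_inv_one_sub_add_mul_exp hr0 hr1]
  exact ENNReal.toReal_ofReal (div_nonneg_of_nonpos (log_nonpos hr0.le hr1.le) (by linarith))
end

section
/- For every real d, (∫_d^∞ (x − d) · e^{−x}/(1 + e^{−x})^2 dx) / (∫_d^∞ e^{−x}/(1 + e^{−x})^2 dx) = log(1 + e^{−d}) / (1 − 1/(1 + e^{−d})), i.e. the conditional expectation E[X − d | X ≥ d] for a standard logistic random variable X equals (1 + e^d) · log(1 + e^{−d}). -/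
open MeasureTheory Set Filter Topology Real

/-!
In terms of the sigmoid `σ x = 1 / (1 + e^{-x})`, the logistic density is `σ' = σ (1 - σ)`, so the
tail mass is `1 - σ d`. For the first moment of the tail, `log σ` has derivative `1 - σ`, hence
`log σ x - (x - d) (1 - σ x)` is an antiderivative of `(x - d) σ'(x)`; it vanishes at `+∞`, so
the tail moment is `-log σ d = log (1 + e^{-d})`. Finally `1 - σ d = σ (-d) = 1 / (1 + e^d)`.
-/

lemma sigmoid_mul_one_sub_sigmoid (x : ℝ) :
    sigmoid x * (1 - sigmoid x) = exp (-x) / (1 + exp (-x)) ^ 2 := by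
  rw [← sigmoid_neg, ← sigmoid_mul_rexp_neg, sigmoid_def]
  field_simp

lemma sigmoid_mul_one_sub_sigmoid_nonneg (x : ℝ) : 0 ≤ sigmoid x * (1 - sigmoid x) :=
  mul_nonneg (sigmoid_nonneg x) (sub_nonneg.2 (sigmoid_le_one x))

lemma log_sigmoid (x : ℝ) : log (sigmoid x) = -log (1 + exp (-x)) :=
  log_inv _

lemma hasDerivAt_log_sigmoid (x : ℝ) :
    HasDerivAt (fun x => log (sigmoid x)) (1 - sigmoid x) x := by
  convert (hasDerivAt_sigmoid x).log (sigmoid_pos x).ne' using 1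
  field_simp [(sigmoid_pos x).ne']

lemma tendsto_sub_mul_one_sub_sigmoid_atTop (d : ℝ) :
    Tendsto (fun x => (x - d) * (1 - sigmoid x)) atTop (𝓝 0) := by
  have h : Tendsto (fun x => (x - d) * exp (-x)) atTop (𝓝 0) := by
    simpa [sub_mul] using (tendsto_pow_mul_exp_neg_atTop_nhds_zero 1).sub
      (tendsto_exp_neg_atTop_nhds_zero.const_mul d)
  simpa [← sigmoid_neg, ← sigmoid_mul_rexp_neg, mul_assoc, mul_comm (exp _)] using
    h.mul tendsto_sigmoid_atTop

lemma integral_Ioi_sigmoid_mul_one_sub_sigmoid (d : ℝ) :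
    ∫ x in Ioi d, sigmoid x * (1 - sigmoid x) = 1 - sigmoid d :=
  integral_Ioi_of_hasDerivAt_of_nonneg' (fun x _ => hasDerivAt_sigmoid x)
    (fun x _ => sigmoid_mul_one_sub_sigmoid_nonneg x)
    tendsto_sigmoid_atTop

lemma integral_Ioi_sub_mul_sigmoid_mul_one_sub_sigmoid (d : ℝ) :
    ∫ x in Ioi d, (x - d) * (sigmoid x * (1 - sigmoid x)) = -log (sigmoid d) := by
  have hderiv (x : ℝ) : HasDerivAt (fun x => log (sigmoid x) - (x - d) * (1 - sigmoid x))
      ((x - d) * (sigmoid x * (1 - sigmoid x))) x := by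
    refine ((hasDerivAt_log_sigmoid x).sub
      (((hasDerivAt_id' x).sub_const d).mul ((hasDerivAt_sigmoid x).const_sub 1))).congr_deriv ?_
    ring
  have hlim : Tendsto (fun x => log (sigmoid x) - (x - d) * (1 - sigmoid x)) atTop (𝓝 0) := by
    simpa using ((continuousAt_log one_ne_zero).tendsto.comp tendsto_sigmoid_atTop).sub
      (tendsto_sub_mul_one_sub_sigmoid_atTop d)
  rw [integral_Ioi_of_hasDerivAt_of_nonneg' (fun x _ => hderiv x) (fun x hx => ?_) hlim]
  · simp
  · exact mul_nonneg (sub_nonneg.2 hx.le) (sigmoid_mul_one_sub_sigmoid_nonneg x)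

/-- For every real `d`, the conditional expectation `E[X − d | X ≥ d]`
of a standard logistic random variable, computed as the ratio of integrals of its density,
equals `log(1 + e^{−d})/(1 − 1/(1 + e^{−d}))`, i.e. `(1 + e^d) log(1 + e^{−d})`. -/
theorem stmt_9 (d : ℝ) :
    (∫ x in Ioi d, (x - d) * (Real.exp (-x) / (1 + Real.exp (-x)) ^ 2)) /
        (∫ x in Ioi d, Real.exp (-x) / (1 + Real.exp (-x)) ^ 2)
      = Real.log (1 + Real.exp (-d)) / (1 - 1 / (1 + Real.exp (-d))) ∧
    Real.log (1 + Real.exp (-d)) / (1 - 1 / (1 + Real.exp (-d)))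
      = (1 + Real.exp d) * Real.log (1 + Real.exp (-d)) := by
  have h_one_sub : 1 - 1 / (1 + exp (-d)) = (1 + exp d)⁻¹ := by
    rw [one_div, ← sigmoid_def, ← sigmoid_neg, sigmoid_def, neg_neg]
  refine ⟨?_, by rw [h_one_sub, div_inv_eq_mul, mul_comm]⟩
  simp_rw [← sigmoid_mul_one_sub_sigmoid, integral_Ioi_sub_mul_sigmoid_mul_one_sub_sigmoid,
    integral_Ioi_sigmoid_mul_one_sub_sigmoid, log_sigmoid, neg_neg, sigmoid_def, one_div]
end

section
/- Let N ≥ 2, ℓ ∈ ℝ^N, g > 0, and fix an index i. Let M = max_{1 ≤ j ≤ N} ℓ_j. Define the perturbed logits q ∈ ℝ^N by q_i = ℓ_i + (M − ℓ_i) = M and, for k ≠ i, q_k = ℓ_k − max(ℓ_k + g − M, 0). Then q_i − q_k ≥ g for every k ≠ i; in particular i is the unique argmax of q. -/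
theorem le_sub_sub_max_sub_zero {α : Type*} [AddCommGroup α] [LinearOrder α]
    [IsOrderedAddMonoid α] (x g M : α) : g ≤ M - (x - max (x + g - M) 0) := by
  calc g = M - (x - (x + g - M)) := by abel
    _ ≤ M - (x - max (x + g - M) 0) := by gcongr; exact le_max_left _ _

/-- Correctness of the Gapped Straight-Through perturbations: with
`M = max_j ℓ_j`, the perturbed logits `q_i = ℓ_i + (M − ℓ_i)` (the `m₁` perturbation) and
`q_k = ℓ_k − max(ℓ_k + g − M, 0)` for `k ≠ i` (the `m₂` perturbation) satisfy
`q_i − q_k ≥ g` for every `k ≠ i`; in particular `i` is the unique argmax of `q`. -/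
theorem stmt_15 {N : ℕ} (ℓ : Fin N → ℝ) (g : ℝ) (hg : 0 < g) (i : Fin N)
    (M : ℝ)
    (q : Fin N → ℝ)
    (hq : ∀ k, q k = if k = i then ℓ i + (M - ℓ i) else ℓ k - max (ℓ k + g - M) 0) :
    ∀ k, k ≠ i → g ≤ q i - q k ∧ q k < q i := by
  intro k hk
  have hqi : q i = M := by rw [hq i, if_pos rfl, add_sub_cancel]
  have hqk : q k = ℓ k - max (ℓ k + g - M) 0 := by rw [hq k, if_neg hk]
  have gap : g ≤ q i - q k := hqi ▸ hqk ▸ le_sub_sub_max_sub_zero (ℓ k) g M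
  exact ⟨gap, sub_pos.mp (hg.trans_le gap)⟩
end
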